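/- Let m be a nonnegative, locally finite Borel measure on ℝ, and let Φ and Ψ be as defined from m. Then the second distributional derivative of Ψ is the measure 2|x| m(dx): for every smooth compactly supported φ : ℝ → ℝ, ∫_ℝ Ψ(x) φ''(x) dx = 2∫_ℝ |x| φ(x) m(dx). -/

import Mathlib

open MeasureTheory Set Function Filter

noncomputable section

/-- The (topological) support of a Borel measure on `ℝ`. -/
def mSupp (m : Measure ℝ) : Set ℝ :=
  {x : ℝ | ∀ ε > (0:ℝ), 0 < m (Ioo (x - ε) (x + ε))}

/-- The support of `m` reaches below `-b` and above `b`, for every `b > 0`. -/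
def SuppCond (m : Measure ℝ) : Prop :=
  ∀ b > (0:ℝ), (mSupp m ∩ Iic (-b)).Nonempty ∧ (mSupp m ∩ Ici b).Nonempty

/-- `Φ(x) = 2∫_{[0,x)} y m(dy)` for `x ≥ 0`, `Φ(x) = 2∫_{[x,0)} y m(dy)` for `x < 0`. -/
def Phi (m : Measure ℝ) (x : ℝ) : ℝ :=
  if 0 ≤ x then 2 * ∫ y in Ico (0:ℝ) x, y ∂m
  else 2 * ∫ y in Ico x (0:ℝ), y ∂m

/-- `Ψ(x) = ∫_0^x Φ(y) dy`. -/
def Psi (m : Measure ℝ) (x : ℝ) : ℝ := ∫ y in (0:ℝ)..x, Phi m y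

/-- `g(x) = o(Ψ(x))` as `|x| → ∞`. -/
def LittleOPsi (m : Measure ℝ) (g : ℝ → ℝ) : Prop :=
  ∀ ε > (0:ℝ), ∃ R : ℝ, ∀ x : ℝ, R ≤ |x| → |g x| ≤ ε * Psi m x

/-- `U(x,t) = o(Ψ(x))` as `|x| → ∞`, locally uniformly in `t ≥ 0`. -/
def GrowthLocUnif (m : Measure ℝ) (U : ℝ → ℝ → ℝ) : Prop :=
  ∀ T > (0:ℝ), ∀ ε > (0:ℝ), ∃ R : ℝ,
    ∀ x t : ℝ, R ≤ |x| → t ∈ Icc (0:ℝ) T → |U x t| ≤ ε * Psi m x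

/-- `f(x,t) = o(Ψ(x))` as `|x| → ∞`, uniformly in `t ∈ [0,T]`. -/
def GrowthUnif (m : Measure ℝ) (T : ℝ) (f : ℝ → ℝ → ℝ) : Prop :=
  ∀ ε > (0:ℝ), ∃ R : ℝ,
    ∀ x t : ℝ, R ≤ |x| → t ∈ Icc (0:ℝ) T → |f x t| ≤ ε * Psi m x

/-- `U` solves `2 m U_t = U_xx` in the sense of distributions on `ℝ × (0,∞)`:
`-2∫∫ U ∂_t φ m(dx) dt = ∫∫ U ∂_xx φ dx dt` for every smooth compactly supported
test function `φ` supported in `ℝ × (0,∞)`. -/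
def SolvesHeat (m : Measure ℝ) (U : ℝ → ℝ → ℝ) : Prop :=
  ∀ φ : ℝ → ℝ → ℝ,
    ContDiff ℝ (⊤ : ℕ∞) (uncurry φ) →
    HasCompactSupport (uncurry φ) →
    tsupport (uncurry φ) ⊆ univ ×ˢ Ioi (0:ℝ) →
    (-2) * (∫ x, (∫ t in Ioi (0:ℝ), U x t * deriv (φ x) t) ∂m)
      = ∫ x, ∫ t in Ioi (0:ℝ), U x t * iteratedDeriv 2 (fun y => φ y t) x

/-- `f = ḡ`: the continuous function agreeing with `g` on `supp m`, and affine on each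
open interval disjoint from `supp m` (linear interpolation between the endpoint values). -/
def IsBarExt (m : Measure ℝ) (g f : ℝ → ℝ) : Prop :=
  Continuous f ∧ (∀ x ∈ mSupp m, f x = g x) ∧
  ∀ a b : ℝ, a < b → Ioo a b ∩ mSupp m = ∅ →
    ∀ x ∈ Icc a b, f x = ((b - x) / (b - a)) * f a + ((x - a) / (b - a)) * f b

/-- The martingale condition `∫_{(−∞,x)} |y| m(dy) = ∫_{(x,∞)} |y| m(dy) = ∞`. -/
def MartCond (m : Measure ℝ) : Prop :=
  ∀ x : ℝ, (∫⁻ y in Iio x, (‖y‖₊ : ENNReal) ∂m = ⊤) ∧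
           (∫⁻ y in Ioi x, (‖y‖₊ : ENNReal) ∂m = ⊤)

/-- `f` is locally Lipschitz on the set `s`. -/
def LocLipOn (f : ℝ × ℝ → ℝ) (s : Set (ℝ × ℝ)) : Prop :=
  ∀ p ∈ s, ∃ ε > (0:ℝ), ∃ K : NNReal, LipschitzOnWith K f (Metric.ball p ε ∩ s)

open ContDiff

variable (m : Measure ℝ) [IsLocallyFiniteMeasure m]

lemma integrableOn_id_Ico (a b : ℝ) : IntegrableOn (fun z : ℝ => z) (Ico a b) m := by
  have : IntegrableOn (fun z : ℝ => z) (Icc a b) m :=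
    continuous_id.continuousOn.integrableOn_compact isCompact_Icc
  exact this.mono_set Ico_subset_Icc_self

lemma phi_mono : Monotone (Phi m) := by
  intro x₁ x₂ h
  unfold Phi
  rcases le_or_gt 0 x₁ with h1 | h1
  · rw [if_pos h1, if_pos (h1.trans h)]
    have hint := integrableOn_id_Ico m 0 x₂
    refine mul_le_mul_of_nonneg_left ?_ (by norm_num)
    refine setIntegral_mono_set hint ?_ ?_
    · filter_upwards [ae_restrict_mem measurableSet_Ico] with z hz using hz.1
    · exact HasSubset.Subset.eventuallyLE (Ico_subset_Ico_right h)
  · rw [if_neg (not_le.2 h1)]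
    rcases le_or_gt 0 x₂ with h2 | h2
    · rw [if_pos h2]
      have hle1 : 2 * ∫ y in Ico x₁ (0:ℝ), y ∂m ≤ 0 := by
        refine mul_nonpos_of_nonneg_of_nonpos (by norm_num) ?_
        refine setIntegral_nonpos measurableSet_Ico fun z hz => hz.2.le
      have hle2 : (0:ℝ) ≤ 2 * ∫ y in Ico (0:ℝ) x₂, y ∂m := by
        refine mul_nonneg (by norm_num) ?_
        refine setIntegral_nonneg measurableSet_Ico fun z hz => hz.1
      linarith
    · rw [if_neg (not_le.2 h2)]
      refine mul_le_mul_of_nonneg_left ?_ (by norm_num)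
      have hint := (integrableOn_id_Ico m x₁ 0).neg
      have := setIntegral_mono_set hint ?_ ?_ (s := Ico x₂ (0:ℝ)) (t := Ico x₁ (0:ℝ))
      · simp only [Pi.neg_apply] at this; rw [integral_neg, integral_neg] at this; linarith
      · filter_upwards [ae_restrict_mem measurableSet_Ico] with z hz using neg_nonneg.2 hz.2.le
      · exact HasSubset.Subset.eventuallyLE (Ico_subset_Ico_left h)

lemma phi_measurable : Measurable (Phi m) := (phi_mono m).measurable

lemma phi_integrableOn_Icc (a b : ℝ) : IntegrableOn (Phi m) (Icc a b) volume :=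
  ((phi_mono m).monotoneOn _).integrableOn_isCompact isCompact_Icc

section Step1

lemma step1 (φ : ℝ → ℝ) (hφ : ContDiff ℝ (⊤ : ℕ∞) φ) (hφc : HasCompactSupport φ) :
    ∫ x, Psi m x * deriv (deriv φ) x = - ∫ y, Phi m y * deriv φ y := by
  have hφ0 : ContDiff ℝ ∞ φ := hφ.of_le (by simp)
  have hφ' : ContDiff ℝ ∞ (deriv φ) := (contDiff_infty_iff_deriv.mp hφ0).2
  have hφ'c : HasCompactSupport (deriv φ) := hφc.deriv
  have hφ''c : HasCompactSupport (deriv (deriv φ)) := hφ'c.deriv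
  have hφ''cont : Continuous (deriv (deriv φ)) := (contDiff_infty_iff_deriv.mp hφ').2.continuous
  -- bound A for support
  obtain ⟨A, hA⟩ := hφ''c.isBounded.subset_closedBall (0:ℝ)
  rw [Real.closedBall_eq_Icc, zero_sub, zero_add] at hA
  -- bound D for φ''
  obtain ⟨D, hD⟩ := hφ''c.exists_bound_of_continuous hφ''cont
  set C : ℝ := max |Phi m (-A)| |Phi m A| with hC
  have hCb : ∀ y ∈ Icc (-A) A, |Phi m y| ≤ C := by
    intro y hy
    rw [abs_le]
    constructor
    · calc -C ≤ -|Phi m (-A)| := by simp [hC]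
        _ ≤ Phi m (-A) := neg_abs_le _
        _ ≤ Phi m y := phi_mono m hy.1
    · calc Phi m y ≤ Phi m A := phi_mono m hy.2
        _ ≤ |Phi m A| := le_abs_self _
        _ ≤ C := le_max_right _ _
  set S1 : Set (ℝ × ℝ) := {p | 0 < p.2 ∧ p.2 ≤ p.1} with hS1def
  set S2 : Set (ℝ × ℝ) := {p | p.1 < p.2 ∧ p.2 ≤ 0} with hS2def
  have hS1 : MeasurableSet S1 :=
    (measurableSet_lt measurable_const measurable_snd).inter
      (measurableSet_le measurable_snd measurable_fst)
  have hS2 : MeasurableSet S2 :=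
    (measurableSet_lt measurable_fst measurable_snd).inter
      (measurableSet_le measurable_snd measurable_const)
  set f1 : ℝ × ℝ → ℝ := fun p =>
    (Phi m p.2 * deriv (deriv φ) p.1) * (S1.indicator 1 p - S2.indicator 1 p) with hf1def
  have hf1meas : Measurable f1 := by
    apply Measurable.mul
    · exact ((phi_measurable m).comp measurable_snd).mul (hφ''cont.measurable.comp measurable_fst)
    · exact (measurable_one.indicator hS1).sub (measurable_one.indicator hS2)
  have hind : ∀ p : ℝ × ℝ, |S1.indicator (1 : ℝ × ℝ → ℝ) p - S2.indicator 1 p| ≤ 1 := by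
    intro p
    by_cases h1 : p ∈ S1
    · have h2 : p ∉ S2 := fun h2 => absurd (h1.1.trans_le h2.2) (lt_irrefl _)
      simp [Set.indicator_apply, h1, h2]
    · by_cases h2 : p ∈ S2 <;> simp [Set.indicator_apply, h1, h2]
  have hsupp : ∀ p : ℝ × ℝ, f1 p ≠ 0 → p ∈ Icc (-A) A ×ˢ Icc (-A) A := by
    intro p hp
    have h1 : deriv (deriv φ) p.1 ≠ 0 := by
      intro h; apply hp; simp [hf1def, h]
    have hmem1 : p.1 ∈ Icc (-A) A := hA (subset_tsupport _ h1)
    refine ⟨hmem1, ?_⟩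
    have h2 : S1.indicator (1 : ℝ × ℝ → ℝ) p - S2.indicator 1 p ≠ 0 := by
      intro h; apply hp; simp [hf1def, h]
    have hA0 : (0:ℝ) ≤ A := by linarith [hmem1.1, hmem1.2]
    by_cases hp1 : p ∈ S1
    · exact ⟨by linarith [hp1.1], hp1.2.trans hmem1.2⟩
    · by_cases hp2 : p ∈ S2
      · exact ⟨hmem1.1.trans hp2.1.le, by linarith [hp2.2]⟩
      · exact absurd (by simp [Set.indicator_apply, hp1, hp2]) h2
  have hC0 : (0:ℝ) ≤ C := le_trans (abs_nonneg _) (le_max_left _ _)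
  have hD0 : (0:ℝ) ≤ D := le_trans (norm_nonneg _) (hD 0)
  have hboxmeas : MeasurableSet (Icc (-A) A ×ˢ Icc (-A) A) :=
    measurableSet_Icc.prod measurableSet_Icc
  have hbox : (volume.prod volume) (Icc (-A) A ×ˢ Icc (-A) A) < ⊤ := by
    rw [Measure.prod_prod]
    exact ENNReal.mul_lt_top (by simp [Real.volume_Icc]) (by simp [Real.volume_Icc])
  have hf1int : Integrable f1 (volume.prod volume) := by
    refine Integrable.mono' (g := (Icc (-A) A ×ˢ Icc (-A) A).indicator (fun _ => C * D))
      ((integrable_indicator_iff hboxmeas).2 (integrableOn_const hbox.ne))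
      hf1meas.aestronglyMeasurable (ae_of_all _ fun p => ?_)
    by_cases hp : f1 p = 0
    · rw [hp]
      simp only [norm_zero]
      exact Set.indicator_nonneg (fun _ _ => mul_nonneg hC0 hD0) p
    · have hmem := hsupp p hp
      rw [Set.indicator_of_mem hmem]
      have h1 : ‖f1 p‖ = |Phi m p.2 * deriv (deriv φ) p.1| * |S1.indicator 1 p - S2.indicator 1 p| := by
        rw [hf1def]; exact abs_mul _ _
      rw [h1]
      calc |Phi m p.2 * deriv (deriv φ) p.1| * |S1.indicator 1 p - S2.indicator 1 p|
          ≤ |Phi m p.2 * deriv (deriv φ) p.1| * 1 :=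
            mul_le_mul_of_nonneg_left (hind p) (abs_nonneg _)
        _ = |Phi m p.2| * |deriv (deriv φ) p.1| := by rw [mul_one, abs_mul]
        _ ≤ C * D := mul_le_mul (hCb _ hmem.2) (hD p.1) (abs_nonneg _) hC0
  have hφ'1 : ContDiff ℝ 1 (deriv φ) := hφ'.of_le (by exact_mod_cast le_top)
  have hPhiIoc : ∀ a b : ℝ, IntegrableOn (Phi m) (Ioc a b) volume := fun a b =>
    (phi_integrableOn_Icc m a b).mono_set Ioc_subset_Icc_self
  have inner1 : ∀ x, (∫ y, f1 (x, y)) = Psi m x * deriv (deriv φ) x := by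
    intro x
    have heq : (fun y => f1 (x, y)) = fun y =>
        deriv (deriv φ) x * ((Ioc 0 x).indicator (Phi m) y - (Ioc x 0).indicator (Phi m) y) := by
      funext y
      have e1 : ((x, y) ∈ S1) ↔ y ∈ Ioc 0 x := by simp [hS1def, Set.mem_Ioc]
      have e2 : ((x, y) ∈ S2) ↔ y ∈ Ioc x 0 := by simp [hS2def, Set.mem_Ioc]
      by_cases h1 : y ∈ Ioc 0 x <;> by_cases h2 : y ∈ Ioc x 0 <;>
        simp [hf1def, Set.indicator_apply, e1, e2, h1, h2] <;> ring
    rw [heq, integral_const_mul,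
      integral_sub ((integrable_indicator_iff measurableSet_Ioc).2 (hPhiIoc 0 x))
        ((integrable_indicator_iff measurableSet_Ioc).2 (hPhiIoc x 0)),
      integral_indicator measurableSet_Ioc, integral_indicator measurableSet_Ioc]
    rw [mul_comm]
    rfl
  have inner2 : ∀ y, (∫ x, f1 (x, y)) = -(Phi m y * deriv φ y) := by
    intro y
    rcases lt_or_ge 0 y with hy | hy
    · have heq : (fun x => f1 (x, y)) = fun x =>
          Phi m y * (Ici y).indicator (deriv (deriv φ)) x := by
        funext x
        have e2 : (x, y) ∉ S2 := fun h => absurd (hy.trans_le h.2) (lt_irrefl _)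
        by_cases h : x ∈ Ici y
        · have e1 : (x, y) ∈ S1 := ⟨hy, h⟩
          simp [hf1def, Set.indicator_apply, e1, e2, h]
        · have e1 : (x, y) ∉ S1 := fun hh => h hh.2
          simp [hf1def, Set.indicator_apply, e1, e2, h]
      rw [heq, integral_const_mul, integral_indicator measurableSet_Ici,
        integral_Ici_eq_integral_Ioi, hφ'c.integral_Ioi_deriv_eq hφ'1]
      ring
    · have heq : (fun x => f1 (x, y)) = fun x =>
          (-Phi m y) * (Iio y).indicator (deriv (deriv φ)) x := by
        funext x
        have e1 : (x, y) ∉ S1 := fun h => absurd (h.1.trans_le hy) (lt_irrefl _)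
        by_cases h : x ∈ Iio y
        · have e2 : (x, y) ∈ S2 := ⟨h, hy⟩
          simp [hf1def, Set.indicator_apply, e1, e2, h]
        · have e2 : (x, y) ∉ S2 := fun hh => h hh.1
          simp [hf1def, Set.indicator_apply, e1, e2, h]
      rw [heq, integral_const_mul, integral_indicator measurableSet_Iio,
        ← integral_Iic_eq_integral_Iio, hφ'c.integral_Iic_deriv_eq hφ'1]
      ring
  calc ∫ x, Psi m x * deriv (deriv φ) x = ∫ x, ∫ y, f1 (x, y) := by
        exact integral_congr_ae (ae_of_all _ fun x => (inner1 x).symm)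
    _ = ∫ y, ∫ x, f1 (x, y) := integral_integral_swap hf1int
    _ = ∫ y, -(Phi m y * deriv φ y) :=
        integral_congr_ae (ae_of_all _ fun y => inner2 y)
    _ = - ∫ y, Phi m y * deriv φ y := integral_neg _

end Step1

lemma step2 (φ : ℝ → ℝ) (hφ : ContDiff ℝ (⊤ : ℕ∞) φ) (hφc : HasCompactSupport φ) :
    ∫ y, Phi m y * deriv φ y = - (2 * ∫ z, |z| * φ z ∂m) := by
  have hφ0 : ContDiff ℝ ∞ φ := hφ.of_le (by simp)
  have hφ1 : ContDiff ℝ 1 φ := hφ0.of_le (by exact_mod_cast le_top)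
  have hφ'c : HasCompactSupport (deriv φ) := hφc.deriv
  have hφ'cont : Continuous (deriv φ) := (contDiff_infty_iff_deriv.mp hφ0).2.continuous
  obtain ⟨A, hA⟩ := hφ'c.isBounded.subset_closedBall (0:ℝ)
  rw [Real.closedBall_eq_Icc, zero_sub, zero_add] at hA
  obtain ⟨D, hD⟩ := hφ'c.exists_bound_of_continuous hφ'cont
  have hD0 : (0:ℝ) ≤ D := le_trans (norm_nonneg _) (hD 0)
  set T1 : Set (ℝ × ℝ) := {p | 0 ≤ p.2 ∧ p.2 < p.1} with hT1def
  set T2 : Set (ℝ × ℝ) := {p | p.1 ≤ p.2 ∧ p.2 < 0} with hT2def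
  have hT1 : MeasurableSet T1 :=
    (measurableSet_le measurable_const measurable_snd).inter
      (measurableSet_lt measurable_snd measurable_fst)
  have hT2 : MeasurableSet T2 :=
    (measurableSet_le measurable_fst measurable_snd).inter
      (measurableSet_lt measurable_snd measurable_const)
  set f2 : ℝ × ℝ → ℝ := fun p =>
    (2 * p.2 * deriv φ p.1) * (T1.indicator 1 p + T2.indicator 1 p) with hf2def
  have hf2meas : Measurable f2 := by
    apply Measurable.mul
    · exact (measurable_const.mul measurable_snd).mul (hφ'cont.measurable.comp measurable_fst)
    · exact (measurable_one.indicator hT1).add (measurable_one.indicator hT2)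
  have hind : ∀ p : ℝ × ℝ, |T1.indicator (1 : ℝ × ℝ → ℝ) p + T2.indicator 1 p| ≤ 1 := by
    intro p
    by_cases h1 : p ∈ T1
    · have h2 : p ∉ T2 := fun h2 => absurd (h1.1.trans_lt h2.2) (lt_irrefl _)
      simp [Set.indicator_apply, h1, h2]
    · by_cases h2 : p ∈ T2 <;> simp [Set.indicator_apply, h1, h2]
  have hsupp : ∀ p : ℝ × ℝ, f2 p ≠ 0 → p ∈ Icc (-A) A ×ˢ Icc (-A) A := by
    intro p hp
    have h1 : deriv φ p.1 ≠ 0 := by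
      intro h; apply hp; simp [hf2def, h]
    have hmem1 : p.1 ∈ Icc (-A) A := hA (subset_tsupport _ h1)
    have hA0 : (0:ℝ) ≤ A := by linarith [hmem1.1, hmem1.2]
    refine ⟨hmem1, ?_⟩
    have h2 : T1.indicator (1 : ℝ × ℝ → ℝ) p + T2.indicator 1 p ≠ 0 := by
      intro h; apply hp; simp [hf2def, h]
    by_cases hp1 : p ∈ T1
    · exact ⟨by linarith [hp1.1], hp1.2.le.trans hmem1.2⟩
    · by_cases hp2 : p ∈ T2
      · exact ⟨hmem1.1.trans hp2.1, by linarith [hp2.2]⟩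
      · exact absurd (by simp [Set.indicator_apply, hp1, hp2]) h2
  have hboxmeas : MeasurableSet (Icc (-A) A ×ˢ Icc (-A) A) :=
    measurableSet_Icc.prod measurableSet_Icc
  have hbox : (volume.prod m) (Icc (-A) A ×ˢ Icc (-A) A) < ⊤ := by
    rw [Measure.prod_prod]
    exact ENNReal.mul_lt_top (by simp [Real.volume_Icc]) isCompact_Icc.measure_lt_top
  have hA0' : (0:ℝ) ≤ |A| := abs_nonneg _
  have hf2int : Integrable f2 (volume.prod m) := by
    refine Integrable.mono' (g := (Icc (-A) A ×ˢ Icc (-A) A).indicator (fun _ => 2 * |A| * D))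
      ((integrable_indicator_iff hboxmeas).2 (integrableOn_const hbox.ne))
      hf2meas.aestronglyMeasurable (ae_of_all _ fun p => ?_)
    by_cases hp : f2 p = 0
    · rw [hp]
      simp only [norm_zero]
      exact Set.indicator_nonneg
        (fun _ _ => mul_nonneg (by positivity) hD0) p
    · have hmem := hsupp p hp
      rw [Set.indicator_of_mem hmem]
      have hz : |p.2| ≤ |A| := by
        rw [abs_le]
        constructor
        · calc -|A| ≤ -A := neg_le_neg (le_abs_self A)
            _ ≤ p.2 := hmem.2.1
        · exact hmem.2.2.trans (le_abs_self A)
      have h1 : ‖f2 p‖ = |2 * p.2 * deriv φ p.1| * |T1.indicator 1 p + T2.indicator 1 p| := by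
        rw [hf2def]; exact abs_mul _ _
      rw [h1]
      calc |2 * p.2 * deriv φ p.1| * |T1.indicator 1 p + T2.indicator 1 p|
          ≤ |2 * p.2 * deriv φ p.1| * 1 := mul_le_mul_of_nonneg_left (hind p) (abs_nonneg _)
        _ = 2 * |p.2| * |deriv φ p.1| := by
            rw [mul_one, abs_mul, abs_mul]; norm_num
        _ ≤ 2 * |A| * D := by
            refine mul_le_mul (by linarith) (hD p.1) (abs_nonneg _) (by positivity)
  have inner1 : ∀ y, (∫ z, f2 (y, z) ∂m) = Phi m y * deriv φ y := by
    intro y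
    rcases le_or_gt 0 y with hy | hy
    · have heq : (fun z => f2 (y, z)) = fun z =>
          (2 * deriv φ y) * (Ico 0 y).indicator (fun z => z) z := by
        funext z
        by_cases h : z ∈ Ico 0 y
        · have e1 : (y, z) ∈ T1 := ⟨h.1, h.2⟩
          have e2 : (y, z) ∉ T2 := fun hh => absurd (h.1.trans_lt hh.2) (lt_irrefl _)
          simp only [hf2def, Pi.one_apply, Set.indicator_of_mem e1, Set.indicator_of_notMem e2,
            Set.indicator_of_mem h]
          ring
        · have e1 : (y, z) ∉ T1 := fun hh => h ⟨hh.1, hh.2⟩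
          have e2 : (y, z) ∉ T2 := fun hh => absurd (hy.trans hh.1) (not_le.2 hh.2)
          simp [hf2def, Set.indicator_of_notMem e1, Set.indicator_of_notMem e2,
            Set.indicator_of_notMem h]
      rw [heq, integral_const_mul, integral_indicator measurableSet_Ico]
      rw [Phi, if_pos hy]
      ring
    · have heq : (fun z => f2 (y, z)) = fun z =>
          (2 * deriv φ y) * (Ico y 0).indicator (fun z => z) z := by
        funext z
        by_cases h : z ∈ Ico y 0
        · have e2 : (y, z) ∈ T2 := ⟨h.1, h.2⟩
          have e1 : (y, z) ∉ T1 := fun hh => absurd (hh.1.trans_lt h.2) (lt_irrefl _)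
          simp only [hf2def, Pi.one_apply, Set.indicator_of_mem e2, Set.indicator_of_notMem e1,
            Set.indicator_of_mem h]
          ring
        · have e1 : (y, z) ∉ T1 := fun hh => absurd (hy.trans_le hh.1) (not_lt.2 hh.2.le)
          have e2 : (y, z) ∉ T2 := fun hh => h ⟨hh.1, hh.2⟩
          simp [hf2def, Set.indicator_of_notMem e1, Set.indicator_of_notMem e2,
            Set.indicator_of_notMem h]
      rw [heq, integral_const_mul, integral_indicator measurableSet_Ico]
      rw [Phi, if_neg (not_le.2 hy)]
      ring
  have inner2 : ∀ z, (∫ y, f2 (y, z)) = -(2 * (|z| * φ z)) := by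
    intro z
    rcases le_or_gt 0 z with hz | hz
    · have heq : (fun y => f2 (y, z)) = fun y =>
          (2 * z) * (Ioi z).indicator (deriv φ) y := by
        funext y
        by_cases h : y ∈ Ioi z
        · have e1 : (y, z) ∈ T1 := ⟨hz, h⟩
          have e2 : (y, z) ∉ T2 := fun hh => absurd (hz.trans_lt hh.2) (lt_irrefl _)
          simp only [hf2def, Pi.one_apply, Set.indicator_of_mem e1, Set.indicator_of_notMem e2,
            Set.indicator_of_mem h]
          ring
        · have e1 : (y, z) ∉ T1 := fun hh => h hh.2
          have e2 : (y, z) ∉ T2 := fun hh => absurd (hz.trans_lt hh.2) (lt_irrefl _)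
          simp [hf2def, Set.indicator_of_notMem e1, Set.indicator_of_notMem e2,
            Set.indicator_of_notMem h]
      rw [heq, integral_const_mul, integral_indicator measurableSet_Ioi,
        hφc.integral_Ioi_deriv_eq hφ1, abs_of_nonneg hz]
      ring
    · have heq : (fun y => f2 (y, z)) = fun y =>
          (2 * z) * (Iic z).indicator (deriv φ) y := by
        funext y
        by_cases h : y ∈ Iic z
        · have e2 : (y, z) ∈ T2 := ⟨h, hz⟩
          have e1 : (y, z) ∉ T1 := fun hh => absurd (hh.1.trans_lt hz) (lt_irrefl _)
          simp only [hf2def, Pi.one_apply, Set.indicator_of_mem e2, Set.indicator_of_notMem e1,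
            Set.indicator_of_mem h]
          ring
        · have e1 : (y, z) ∉ T1 := fun hh => absurd (hh.1.trans_lt hz) (lt_irrefl _)
          have e2 : (y, z) ∉ T2 := fun hh => h hh.1
          simp [hf2def, Set.indicator_of_notMem e1, Set.indicator_of_notMem e2,
            Set.indicator_of_notMem h]
      rw [heq, integral_const_mul, integral_indicator measurableSet_Iic,
        hφc.integral_Iic_deriv_eq hφ1, abs_of_neg hz]
      ring
  calc ∫ y, Phi m y * deriv φ y = ∫ y, ∫ z, f2 (y, z) ∂m :=
        integral_congr_ae (ae_of_all _ fun y => (inner1 y).symm)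
    _ = ∫ z, (∫ y, f2 (y, z)) ∂m := integral_integral_swap hf2int
    _ = ∫ z, -(2 * (|z| * φ z)) ∂m :=
        integral_congr_ae (ae_of_all _ fun z => inner2 z)
    _ = - (2 * ∫ z, |z| * φ z ∂m) := by
        rw [integral_neg, integral_const_mul]

/-- The second distributional derivative of `Ψ` is the measure `2|x| m(dx)`:
`∫ Ψ φ'' dx = 2 ∫ |x| φ m(dx)` for every smooth compactly supported `φ`. -/
theorem psi_second_derivative
    (m : Measure ℝ) [IsLocallyFiniteMeasure m]
    (φ : ℝ → ℝ) (hφ : ContDiff ℝ (⊤ : ℕ∞) φ) (hφc : HasCompactSupport φ) :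
    ∫ x, Psi m x * iteratedDeriv 2 φ x = 2 * ∫ x, |x| * φ x ∂m := by
  have h2 : iteratedDeriv 2 φ = deriv (deriv φ) := by
    rw [iteratedDeriv_succ, iteratedDeriv_one]
  calc ∫ x, Psi m x * iteratedDeriv 2 φ x = ∫ x, Psi m x * deriv (deriv φ) x := by rw [h2]
    _ = - ∫ y, Phi m y * deriv φ y := step1 m φ hφ hφc
    _ = 2 * ∫ x, |x| * φ x ∂m := by rw [step2 m φ hφ hφc]; ring
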